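/- Let n ≥ 1, α ∈ [0, 2/(n−1)) (α ∈ [0,∞) if n = 1), p = α + 2, and let (q,p) be admissible with q > 2; let q', p' be the conjugate exponents. Let ψ : ℝⁿ × ℝⁿ × ℝ × [0,∞) → ℂ satisfy |ψ(x,y,t,r)| ≤ C₀ r^α, and set G(z,t,w) = ψ(x,y,t,|w|) w. Then there is a constant C, depending only on n, α, q and C₀, such that for every T > 0 and every u : ℂⁿ × [−T,T] → ℂ that is Schwartz in z for each t and jointly measurable, ( ∫_{−T}^{T} ‖G(z,t,u(z,t))‖_{L^{p'}_z}^{q'} dt )^{1/q'} ≤ C T^{(q−q')/(q q')} ( ess sup_{|t|≤T} ‖u(·,t)‖_{W̃^{1,2}} )^α ( ∫_{−T}^{T} ‖u(·,t)‖_{L^p}^q dt )^{1/q}. -/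

import Mathlib

open MeasureTheory Real ENNReal

noncomputable section

/-- `L_j f = ∂_{x_j} f + (i y_j/2) f`, acting on functions on ℂⁿ ≃ ℝ^{2n}. -/
def Lop (n : ℕ) (j : Fin n) (f : (Fin n → ℂ) → ℂ) (z : Fin n → ℂ) : ℂ :=
  fderiv ℝ f z (Pi.single j 1) + Complex.I * ((z j).im : ℂ) / 2 * f z

/-- `M_j f = ∂_{y_j} f − (i x_j/2) f`, acting on functions on ℂⁿ ≃ ℝ^{2n}. -/
def Mop (n : ℕ) (j : Fin n) (f : (Fin n → ℂ) → ℂ) (z : Fin n → ℂ) : ℂ :=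
  fderiv ℝ f z (Pi.single j Complex.I) - Complex.I * ((z j).re : ℂ) / 2 * f z

/-- The Sobolev norm `‖f‖_{W̃^{1,p}} = max{‖f‖_{L^p}, ‖L_j f‖_{L^p}, ‖M_j f‖_{L^p} : j}`. -/
def sobNorm (n : ℕ) (p : ℝ≥0∞) (f : (Fin n → ℂ) → ℂ) : ℝ≥0∞ :=
  max (eLpNorm f p volume)
    (⨆ j : Fin n, max (eLpNorm (Lop n j f) p volume) (eLpNorm (Mop n j f) p volume))

/-- A pair `(q,p)` is admissible if `2 < q < ∞` and `1/q ≥ n(1/2 − 1/p) ≥ 0`. -/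
def Admissible (n : ℕ) (q p : ℝ) : Prop :=
  2 < q ∧ (n : ℝ) * (1 / 2 - 1 / p) ≤ 1 / q ∧ 0 ≤ (n : ℝ) * (1 / 2 - 1 / p)

/-!
Since `|G(z,t,w)| ≤ C₀ |w|^(α+1)` and `p' (α + 1) = p`, one has
`‖G(·,t,u)‖_{p'} ≤ C₀ ‖u(t)‖_p^α ‖u(t)‖_p`. The factor `‖u(t)‖_p^α` is controlled by the
embedding `W̃^{1,2} ⊂ L^p`, valid because `2 ≤ p < 2n/(n-1)`, and Hölder's inequality in time
(`q' ≤ q` on an interval of length `2T`) produces the factor `T^(1/q' - 1/q)`.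

The embedding rests on the diamagnetic inequality
`|∇|f|^s| ≤ s |f|^(s-1) ∑ⱼ (|Lⱼ f| + |Mⱼ f|)`: the magnetic terms of `Lⱼ`, `Mⱼ` are `i`-multiples
of `f`, hence orthogonal to `f`. Feeding `|f|^s` into the Gagliardo–Nirenberg–Sobolev inequality
on `ℝ^{2n}` and bounding the gradient term by Cauchy–Schwarz turns an `L^{2(s-1)}` bound into an
`L^{s·2n/(2n-1)}` bound. Starting from `L²`, each step gains a fixed amount as long as the exponent
stays below `2n/(n-1)`; intermediate exponents follow by interpolation with `L²`.
-/

open Filter Module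
open scoped NNReal InnerProductSpace

section Lebesgue

variable {X : Type*} [MeasurableSpace X] {μ : Measure X}

theorem lintegral_rpow_convex_combination_le {g : X → ℝ≥0∞} (hg : AEMeasurable g μ)
    {a b θ : ℝ} (ha : 0 ≤ a) (hb : 0 ≤ b) (hθ₀ : 0 ≤ θ) (hθ₁ : θ ≤ 1) :
    ∫⁻ x, g x ^ (θ * a + (1 - θ) * b) ∂μ ≤
      (∫⁻ x, g x ^ a ∂μ) ^ θ * (∫⁻ x, g x ^ b ∂μ) ^ (1 - θ) := by
  have hsplit : ∀ x, g x ^ (θ * a + (1 - θ) * b) = (g x ^ a) ^ θ * (g x ^ b) ^ (1 - θ) :=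
    fun x => by
      rw [ENNReal.rpow_add_of_nonneg _ _ (by positivity) (by nlinarith), ← ENNReal.rpow_mul,
        ← ENNReal.rpow_mul, mul_comm a, mul_comm b]
  simp_rw [hsplit]
  exact ENNReal.lintegral_mul_norm_pow_le (hg.pow_const a) (hg.pow_const b) hθ₀ (by linarith)
    (by ring)

theorem lintegral_enorm_rpow_one_div_eq_eLpNorm {ε : Type*} [ENorm ε] {f : X → ε} {p : ℝ}
    (hp : 0 < p) : (∫⁻ x, ‖f x‖ₑ ^ p ∂μ) ^ (1 / p) = eLpNorm f (ENNReal.ofReal p) μ := by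
  rw [eLpNorm_eq_lintegral_rpow_enorm_toReal (by simpa using hp) ofReal_ne_top,
    ENNReal.toReal_ofReal hp.le]

theorem eLpNorm_const_mul_ennreal {f : X → ℝ≥0∞} (hf : AEMeasurable f μ) (c : ℝ≥0∞)
    {p : ℝ} (hp : 0 < p) :
    eLpNorm (fun x => c * f x) (ENNReal.ofReal p) μ = c * eLpNorm f (ENNReal.ofReal p) μ := by
  simp_rw [← lintegral_enorm_rpow_one_div_eq_eLpNorm hp, enorm_eq_self,
    ENNReal.mul_rpow_of_nonneg _ _ hp.le]
  rw [lintegral_const_mul'' _ (hf.pow_const p), ENNReal.mul_rpow_of_nonneg _ _ (by positivity),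
    ← ENNReal.rpow_mul, mul_one_div_cancel hp.ne', ENNReal.rpow_one]

theorem eLpNorm_le_const_mul_eLpNorm_mul_measure_univ [IsFiniteMeasure μ]
    {F h : X → ℝ≥0∞} {c : ℝ≥0∞} (hF : ∀ᵐ x ∂μ, F x ≤ c * h x) (hh : AEMeasurable h μ)
    {p q : ℝ} (hp : 0 < p) (hpq : p ≤ q) :
    eLpNorm F (ENNReal.ofReal p) μ ≤
      c * eLpNorm h (ENNReal.ofReal q) μ * μ Set.univ ^ (1 / p - 1 / q) := by
  calc eLpNorm F (ENNReal.ofReal p) μ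
      ≤ eLpNorm (fun x => c * h x) (ENNReal.ofReal p) μ := eLpNorm_mono_enorm_ae hF
    _ = c * eLpNorm h (ENNReal.ofReal p) μ := eLpNorm_const_mul_ennreal hh c hp
    _ ≤ c * (eLpNorm h (ENNReal.ofReal q) μ * μ Set.univ ^ (1 / p - 1 / q)) := by
        gcongr
        simpa [ENNReal.toReal_ofReal hp.le, ENNReal.toReal_ofReal (hp.le.trans hpq)] using
          eLpNorm_le_eLpNorm_mul_rpow_measure_univ (ENNReal.ofReal_le_ofReal hpq)
            hh.aestronglyMeasurable
    _ = _ := (mul_assoc _ _ _).symm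

theorem eLpNorm_le_of_norm_le_mul_rpow {E F : Type*} [NormedAddCommGroup E]
    [NormedAddCommGroup F] {g : X → E} {f : X → F} {C a : ℝ} (hC : 0 ≤ C) (ha : 0 < a)
    (hg : ∀ x, ‖g x‖ ≤ C * ‖f x‖ ^ a) (p : ℝ≥0∞) :
    eLpNorm g p μ ≤ ENNReal.ofReal C * eLpNorm f (p * ENNReal.ofReal a) μ ^ a := by
  calc eLpNorm g p μ ≤ eLpNorm (fun x => C * ‖f x‖ ^ a) p μ :=
        eLpNorm_mono_real hg
    _ = ENNReal.ofReal C * eLpNorm f (p * ENNReal.ofReal a) μ ^ a := by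
        rw [← eLpNorm_norm_rpow f ha, ← Real.enorm_of_nonneg hC]
        exact eLpNorm_const_smul C (fun x => ‖f x‖ ^ a) p μ

theorem eLpNorm_le_of_norm_le_mul_rpow_mul {f g : X → ℂ} {C₀ α : ℝ} (hC₀ : 0 ≤ C₀) (hα : 0 ≤ α)
    (hg : ∀ x, ‖g x‖ ≤ C₀ * ‖f x‖ ^ α * ‖f x‖) :
    eLpNorm g (ENNReal.ofReal ((α + 2) / (α + 1))) μ ≤
      ENNReal.ofReal C₀ * eLpNorm f (ENNReal.ofReal (α + 2)) μ ^ α *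
        eLpNorm f (ENNReal.ofReal (α + 2)) μ := by
  have hexp : ENNReal.ofReal ((α + 2) / (α + 1)) * ENNReal.ofReal (α + 1) =
      ENNReal.ofReal (α + 2) := by
    rw [← ENNReal.ofReal_mul (by positivity), div_mul_cancel₀ _ (by linarith)]
  have hg' : ∀ x, ‖g x‖ ≤ C₀ * ‖f x‖ ^ (α + 1) := fun x => by
    rw [Real.rpow_add_one' (norm_nonneg _) (by linarith), ← mul_assoc]
    exact hg x
  refine (eLpNorm_le_of_norm_le_mul_rpow hC₀ (by linarith) hg' _).trans_eq ?_
  rw [hexp, ENNReal.rpow_add_of_nonneg _ _ hα zero_le_one, ENNReal.rpow_one, mul_assoc]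

theorem lintegral_enorm_rpow_mul_enorm_le {E F : Type*} [NormedAddCommGroup E]
    [NormedAddCommGroup F] {f : X → E} {h : X → F} (hf : AEStronglyMeasurable f μ)
    (hh : AEStronglyMeasurable h μ) (a : ℝ) :
    ∫⁻ x, ‖f x‖ₑ ^ a * ‖h x‖ₑ ∂μ ≤ (∫⁻ x, ‖f x‖ₑ ^ (2 * a) ∂μ) ^ (1 / 2 : ℝ) * eLpNorm h 2 μ := by
  have hCS := ENNReal.lintegral_mul_le_Lp_mul_Lq μ Real.HolderConjugate.two_two
    (hf.enorm.pow_const a) hh.enorm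
  simp only [Pi.mul_apply, ← ENNReal.rpow_mul, mul_comm a] at hCS
  refine hCS.trans_eq ?_
  rw [lintegral_enorm_rpow_one_div_eq_eLpNorm two_pos, ENNReal.ofReal_ofNat]

end Lebesgue

theorem measurable_eLpNorm_of_measurable_uncurry {X Y E : Type*} [MeasurableSpace X]
    [MeasurableSpace Y] [NormedAddCommGroup E] [MeasurableSpace E] [OpensMeasurableSpace E]
    {ν : Measure X} [SFinite ν] {u : Y → X → E} (hu : Measurable fun p : X × Y => u p.2 p.1)
    {p : ℝ} (hp : 0 < p) : Measurable fun y => eLpNorm (u y) (ENNReal.ofReal p) ν := by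
  simp_rw [← lintegral_enorm_rpow_one_div_eq_eLpNorm hp]
  exact ((hu.enorm.pow_const p).lintegral_prod_left').pow_const _

theorem lintegral_Icc_rpow_one_div_le {F h : ℝ → ℝ≥0∞} {c : ℝ≥0∞} {T : ℝ}
    (hF : ∀ᵐ t ∂volume.restrict (Set.Icc (-T) T), F t ≤ c * h t) (hh : Measurable h)
    {p q : ℝ} (hp : 0 < p) (hpq : p ≤ q) :
    (∫⁻ t in Set.Icc (-T) T, F t ^ p) ^ (1 / p) ≤
      ENNReal.ofReal (2 * T) ^ (1 / p - 1 / q) * c *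
        (∫⁻ t in Set.Icc (-T) T, h t ^ q) ^ (1 / q) := by
  have := eLpNorm_le_const_mul_eLpNorm_mul_measure_univ hF hh.aemeasurable hp hpq
  simp only [← lintegral_enorm_rpow_one_div_eq_eLpNorm hp,
    ← lintegral_enorm_rpow_one_div_eq_eLpNorm (hp.trans_le hpq), enorm_eq_self,
    Measure.restrict_apply_univ, Real.volume_Icc, sub_neg_eq_add, ← two_mul] at this
  rwa [mul_comm, ← mul_assoc] at this


theorem Complex.real_inner_mul_self_right (w a : ℂ) : ⟪w, a * w⟫_ℝ = a.re * ‖w‖ ^ 2 := by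
  rw [Complex.inner, mul_assoc, Complex.mul_conj, ← Complex.sq_norm, Complex.re_mul_ofReal]

theorem Pi.single_eq_re_smul_add_im_smul {ι : Type*} [DecidableEq ι] (j : ι) (w : ℂ) :
    (Pi.single j w : ι → ℂ) =
      w.re • (Pi.single j 1 : ι → ℂ) + w.im • (Pi.single j Complex.I : ι → ℂ) := by
  ext i
  by_cases h : i = j
  · subst h; simp
  · simp [h]

theorem ContinuousLinearMap.norm_le_sum_single {ι F : Type*} [Fintype ι] [DecidableEq ι]
    [NormedAddCommGroup F] [NormedSpace ℝ F] (D : (ι → ℂ) →L[ℝ] F) :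
    ‖D‖ ≤ ∑ j, (‖D (Pi.single j 1)‖ + ‖D (Pi.single j Complex.I)‖) := by
  refine D.opNorm_le_bound (by positivity) fun v => ?_
  have hre : ∀ j, |(v j).re| ≤ ‖v‖ := fun j =>
    (Complex.abs_re_le_norm _).trans (norm_le_pi_norm v j)
  have him : ∀ j, |(v j).im| ≤ ‖v‖ := fun j =>
    (Complex.abs_im_le_norm _).trans (norm_le_pi_norm v j)
  conv_lhs => rw [← Finset.univ_sum_single v]
  rw [map_sum, Finset.sum_mul]
  refine (norm_sum_le _ _).trans (Finset.sum_le_sum fun j _ => ?_)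
  rw [Pi.single_eq_re_smul_add_im_smul, map_add, map_smul, map_smul]
  refine (norm_add_le _ _).trans ?_
  rw [norm_smul, norm_smul, Real.norm_eq_abs, Real.norm_eq_abs, add_mul]
  rw [mul_comm ‖D _‖, mul_comm ‖D _‖]
  gcongr
  exacts [hre j, him j]

section Diamagnetic

variable {E : Type*} [NormedAddCommGroup E] [NormedSpace ℝ E] {f : E → ℂ} {s : ℝ}

theorem norm_fderiv_norm_rpow_apply_le_gauge (hf : Differentiable ℝ f) (hs : 1 < s) (z v : E)
    {a : ℂ} (ha : a.re = 0) :
    ‖fderiv ℝ (fun x => ‖f x‖ ^ s) z v‖ ≤ s * ‖f z‖ ^ (s - 1) * ‖fderiv ℝ f z v + a * f z‖ := by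
  have hgauge : ⟪f z, fderiv ℝ f z v⟫_ℝ = ⟪f z, fderiv ℝ f z v + a * f z⟫_ℝ := by
    rw [inner_add_right, Complex.real_inner_mul_self_right, ha, zero_mul, add_zero]
  rw [hf.fderiv_norm_rpow hs]
  simp only [smul_apply, ContinuousLinearMap.comp_apply, innerSL_apply_apply,
    smul_eq_mul, hgauge]
  calc ‖s * ‖f z‖ ^ (s - 2) * ⟪f z, fderiv ℝ f z v + a * f z⟫_ℝ‖
      ≤ s * ‖f z‖ ^ (s - 2) * (‖f z‖ * ‖fderiv ℝ f z v + a * f z‖) := by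
        rw [norm_mul, Real.norm_of_nonneg (by positivity), Real.norm_eq_abs]
        gcongr
        exact abs_real_inner_le_norm _ _
    _ = s * ‖f z‖ ^ (s - 1) * ‖fderiv ℝ f z v + a * f z‖ := by
        rw [← mul_assoc, mul_assoc s, ← Real.rpow_add_one' (norm_nonneg _) (by linarith)]
        ring_nf

end Diamagnetic

theorem norm_fderiv_norm_rpow_le_sum_Lop_Mop {n : ℕ} {f : (Fin n → ℂ) → ℂ} {s : ℝ}
    (hf : Differentiable ℝ f) (hs : 1 < s) (z : Fin n → ℂ) :
    ‖fderiv ℝ (fun x => ‖f x‖ ^ s) z‖ ≤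
      s * ‖f z‖ ^ (s - 1) * ∑ j, (‖Lop n j f z‖ + ‖Mop n j f z‖) := by
  refine (ContinuousLinearMap.norm_le_sum_single _).trans ?_
  rw [Finset.mul_sum]
  refine Finset.sum_le_sum fun j _ => ?_
  rw [mul_add]
  refine add_le_add (norm_fderiv_norm_rpow_apply_le_gauge hf hs z _ (by simp)) ?_
  simpa only [Mop, sub_eq_add_neg, neg_mul] using
    norm_fderiv_norm_rpow_apply_le_gauge hf hs z _ (a := -(Complex.I * ((z j).re : ℂ) / 2))
      (by simp)

section GagliardoNirenberg

variable {E F : Type*} [NormedAddCommGroup E] [NormedSpace ℝ E] [NormedAddCommGroup F]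
  [NormedSpace ℝ F]

theorem enorm_fderiv_smul_le {χ : E → ℝ} {g : E → F} {x : E} (hχ : DifferentiableAt ℝ χ x)
    (hg : DifferentiableAt ℝ g x) :
    ‖fderiv ℝ (χ • g) x‖ₑ ≤ ‖χ x‖ₑ * ‖fderiv ℝ g x‖ₑ + ‖fderiv ℝ χ x‖ₑ * ‖g x‖ₑ := by
  rw [fderiv_smul hχ hg]
  simp only [enorm_eq_nnnorm, ← ENNReal.coe_mul, ← ENNReal.coe_add, ENNReal.coe_le_coe]
  refine (nnnorm_add_le _ _).trans_eq ?_
  rw [nnnorm_smul, ContinuousLinearMap.nnnorm_smulRight_apply]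

variable [MeasurableSpace E] [BorelSpace E] [FiniteDimensional ℝ E] (μ : Measure E)
  [μ.IsAddHaarMeasure]

/-- The cutoffs `φ (x / (k + 1))` have uniformly bounded gradients, so the compactly supported
inequality for `φ (x / (k + 1)) • g` passes to the limit `k → ∞` by Fatou's lemma. -/
theorem exists_lintegral_rpow_le_lintegral_fderiv_add {d : ℝ}
    (hd : (finrank ℝ E : ℝ).HolderConjugate d) :
    ∃ M : ℝ≥0, ∀ g : E → F, ContDiff ℝ 1 g →
      ∫⁻ x, ‖g x‖ₑ ^ d ∂μ ≤ lintegralPowLePowLIntegralFDerivConst μ d *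
        (∫⁻ x, ‖fderiv ℝ g x‖ₑ ∂μ + M * ∫⁻ x, ‖g x‖ₑ ∂μ) ^ d := by
  let φ : ContDiffBump (0 : E) := ⟨1, 2, one_pos, one_lt_two⟩
  have hφ : ContDiff ℝ 1 φ := φ.contDiff
  obtain ⟨C, hC⟩ := (hφ.continuous_fderiv one_ne_zero).bounded_above_of_compact_support
    (φ.hasCompactSupport.fderiv ℝ)
  refine ⟨C.toNNReal, fun g hg => ?_⟩
  let χ : ℕ → E → ℝ := fun k x => φ (((k : ℝ) + 1)⁻¹ • x)
  have hχ : ∀ k, ContDiff ℝ 1 (χ k) := fun k => hφ.comp (contDiff_const_smul _)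
  have hχ_le_one : ∀ k x, ‖χ k x‖ₑ ≤ 1 := fun k x => by
    rw [← ofReal_norm, Real.norm_of_nonneg φ.nonneg]
    exact ENNReal.ofReal_le_one.2 φ.le_one
  have hχ_fderiv : ∀ k x, ‖fderiv ℝ (χ k) x‖ₑ ≤ C.toNNReal := fun k x => by
    have hc : ‖((k : ℝ) + 1)⁻¹‖ ≤ 1 := by
      rw [Real.norm_of_nonneg (by positivity)]
      exact inv_le_one_of_one_le₀ (by simp)
    rw [fderiv_comp_smul, ← ofReal_norm, norm_smul]
    exact ENNReal.ofReal_le_ofReal ((mul_le_of_le_one_left (norm_nonneg _) hc).trans (hC _))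
  have hχ_eventually_one : ∀ x, ∀ᶠ k in atTop, χ k x = 1 := fun x => by
    filter_upwards [eventually_ge_atTop ⌈‖x‖⌉₊] with k hk
    refine φ.one_of_mem_closedBall ?_
    rw [mem_closedBall_zero_iff, norm_smul, Real.norm_of_nonneg (by positivity),
      inv_mul_le_one₀ (by positivity)]
    exact (Nat.le_ceil _).trans (by exact_mod_cast hk.trans (Nat.le_succ k))
  have htrunc : ∀ k, ∫⁻ x, ‖(χ k • g) x‖ₑ ^ d ∂μ ≤ lintegralPowLePowLIntegralFDerivConst μ d *
      (∫⁻ x, ‖fderiv ℝ g x‖ₑ ∂μ + C.toNNReal * ∫⁻ x, ‖g x‖ₑ ∂μ) ^ d := fun k => by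
    refine (lintegral_pow_le_pow_lintegral_fderiv μ ((hχ k).smul hg)
      (φ.hasCompactSupport.comp_smul (by positivity)).smul_right hd).trans ?_
    refine mul_le_mul_right (ENNReal.rpow_le_rpow ?_ hd.symm.nonneg) _
    rw [← lintegral_const_mul' _ _ ENNReal.coe_ne_top, ← lintegral_add_left'
      (hg.continuous_fderiv one_ne_zero).measurable.enorm.aemeasurable]
    refine lintegral_mono fun x => (enorm_fderiv_smul_le ((hχ k).differentiable one_ne_zero x)
      (hg.differentiable one_ne_zero x)).trans ?_
    gcongr
    · exact mul_le_of_le_one_left' (hχ_le_one k x)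
    · exact hχ_fderiv k x
  calc ∫⁻ x, ‖g x‖ₑ ^ d ∂μ = ∫⁻ x, liminf (fun k => ‖(χ k • g) x‖ₑ ^ d) atTop ∂μ := by
        refine lintegral_congr fun x => ?_
        have hx : (fun k => ‖(χ k • g) x‖ₑ ^ d) =ᶠ[atTop] fun _ => ‖g x‖ₑ ^ d :=
          (hχ_eventually_one x).mono fun k hk => by simp [hk]
        rw [liminf_congr hx, liminf_const]
    _ ≤ liminf (fun k => ∫⁻ x, ‖(χ k • g) x‖ₑ ^ d ∂μ) atTop :=
        lintegral_liminf_le fun k =>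
          ((hχ k).continuous.smul hg.continuous).enorm.measurable.pow_const d
    _ ≤ _ := liminf_le_of_frequently_le' (Frequently.of_forall htrunc)

end GagliardoNirenberg

section SobolevEmbedding

variable {n : ℕ}

theorem eLpNorm_le_sobNorm (p : ℝ≥0∞) (f : (Fin n → ℂ) → ℂ) :
    eLpNorm f p volume ≤ sobNorm n p f :=
  le_max_left _ _

theorem eLpNorm_Lop_le_sobNorm (p : ℝ≥0∞) (f : (Fin n → ℂ) → ℂ) (j : Fin n) :
    eLpNorm (Lop n j f) p volume ≤ sobNorm n p f :=
  (le_max_left _ _).trans <| (le_iSup (fun j => max (eLpNorm (Lop n j f) p volume)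
    (eLpNorm (Mop n j f) p volume)) j).trans (le_max_right _ _)

theorem eLpNorm_Mop_le_sobNorm (p : ℝ≥0∞) (f : (Fin n → ℂ) → ℂ) (j : Fin n) :
    eLpNorm (Mop n j f) p volume ≤ sobNorm n p f :=
  (le_max_right _ _).trans <| (le_iSup (fun j => max (eLpNorm (Lop n j f) p volume)
    (eLpNorm (Mop n j f) p volume)) j).trans (le_max_right _ _)

theorem lintegral_enorm_sq_le_sobNorm_sq (f : (Fin n → ℂ) → ℂ) :
    ∫⁻ z, ‖f z‖ₑ ^ (2 : ℝ) ≤ sobNorm n 2 f ^ (2 : ℝ) := by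
  have h := eLpNorm_nnreal_pow_eq_lintegral (f := f) (μ := volume) (p := 2) two_ne_zero
  simp only [NNReal.coe_ofNat, ENNReal.coe_ofNat] at h
  rw [← h]
  gcongr
  exact eLpNorm_le_sobNorm 2 f

theorem ContDiff.continuous_Lop {f : (Fin n → ℂ) → ℂ} (hf : ContDiff ℝ 1 f) (j : Fin n) :
    Continuous (Lop n j f) := by
  unfold Lop
  fun_prop

theorem ContDiff.continuous_Mop {f : (Fin n → ℂ) → ℂ} (hf : ContDiff ℝ 1 f) (j : Fin n) :
    Continuous (Mop n j f) := by
  unfold Mop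
  fun_prop

theorem lintegral_enorm_fderiv_norm_rpow_le {f : (Fin n → ℂ) → ℂ} (hf : ContDiff ℝ 1 f) {s : ℝ}
    (hs : 1 < s) :
    ∫⁻ z, ‖fderiv ℝ (fun x => ‖f x‖ ^ s) z‖ₑ ≤
      ENNReal.ofReal s * (2 * n) * (∫⁻ z, ‖f z‖ₑ ^ (2 * (s - 1))) ^ (1 / 2 : ℝ) *
        sobNorm n 2 f := by
  set I := (∫⁻ z, ‖f z‖ₑ ^ (2 * (s - 1))) ^ (1 / 2 : ℝ)
  have hpt : ∀ z, ‖fderiv ℝ (fun x => ‖f x‖ ^ s) z‖ₑ ≤ ENNReal.ofReal s *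
      ∑ j, (‖f z‖ₑ ^ (s - 1) * ‖Lop n j f z‖ₑ + ‖f z‖ₑ ^ (s - 1) * ‖Mop n j f z‖ₑ) := fun z => by
    rw [← ofReal_norm]
    refine (ENNReal.ofReal_le_ofReal (norm_fderiv_norm_rpow_le_sum_Lop_Mop
      (hf.differentiable one_ne_zero) hs z)).trans_eq ?_
    rw [mul_assoc, ENNReal.ofReal_mul (by linarith), Finset.mul_sum,
      ENNReal.ofReal_sum_of_nonneg fun j _ => by positivity]
    refine congrArg _ (Finset.sum_congr rfl fun j _ => ?_)
    rw [mul_add, ENNReal.ofReal_add (by positivity) (by positivity),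
      ENNReal.ofReal_mul (by positivity), ENNReal.ofReal_mul (by positivity),
      ← ENNReal.ofReal_rpow_of_nonneg (norm_nonneg _) (by linarith), ofReal_norm, ofReal_norm,
      ofReal_norm]
  have hterm : ∀ h : (Fin n → ℂ) → ℂ, Continuous h → eLpNorm h 2 volume ≤ sobNorm n 2 f →
      ∫⁻ z, ‖f z‖ₑ ^ (s - 1) * ‖h z‖ₑ ≤ I * sobNorm n 2 f := fun h hh hN =>
    (lintegral_enorm_rpow_mul_enorm_le hf.continuous.aestronglyMeasurable
      hh.aestronglyMeasurable (s - 1)).trans (by gcongr)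
  calc ∫⁻ z, ‖fderiv ℝ (fun x => ‖f x‖ ^ s) z‖ₑ
      ≤ ∫⁻ z, ENNReal.ofReal s *
          ∑ j, (‖f z‖ₑ ^ (s - 1) * ‖Lop n j f z‖ₑ + ‖f z‖ₑ ^ (s - 1) * ‖Mop n j f z‖ₑ) :=
        lintegral_mono hpt
    _ = ENNReal.ofReal s * ∑ j, ((∫⁻ z, ‖f z‖ₑ ^ (s - 1) * ‖Lop n j f z‖ₑ) +
          ∫⁻ z, ‖f z‖ₑ ^ (s - 1) * ‖Mop n j f z‖ₑ) := by
        have hmeas : ∀ h : (Fin n → ℂ) → ℂ, Continuous h →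
            Measurable fun z => ‖f z‖ₑ ^ (s - 1) * ‖h z‖ₑ := fun h hh =>
          (hf.continuous.enorm.measurable.pow_const _).mul hh.enorm.measurable
        have hmeas' : ∀ j, Measurable fun z =>
            ‖f z‖ₑ ^ (s - 1) * ‖Lop n j f z‖ₑ + ‖f z‖ₑ ^ (s - 1) * ‖Mop n j f z‖ₑ := fun j =>
          (hmeas _ (hf.continuous_Lop j)).add (hmeas _ (hf.continuous_Mop j))
        rw [lintegral_const_mul' _ _ ofReal_ne_top, lintegral_finsetSum _ fun j _ => hmeas' j]
        exact congrArg _ (Finset.sum_congr rfl fun j _ =>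
          lintegral_add_left (hmeas _ (hf.continuous_Lop j)) _)
    _ ≤ ENNReal.ofReal s * ∑ _j : Fin n, (I * sobNorm n 2 f + I * sobNorm n 2 f) :=
        mul_le_mul_right (Finset.sum_le_sum fun j _ => add_le_add
          (hterm _ (hf.continuous_Lop j) (eLpNorm_Lop_le_sobNorm 2 f j))
          (hterm _ (hf.continuous_Mop j) (eLpNorm_Mop_le_sobNorm 2 f j))) _
    _ = _ := by
        simp only [Finset.sum_const, Finset.card_univ, Fintype.card_fin, nsmul_eq_mul]
        ring

end SobolevEmbedding

section Iteration

variable {n : ℕ}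

def SobolevBound (n : ℕ) (r : ℝ) : Prop :=
  ∃ c : ℝ≥0∞, c ≠ ∞ ∧ ∀ f : SchwartzMap (Fin n → ℂ) ℂ,
    ∫⁻ z, ‖f z‖ₑ ^ r ≤ c * sobNorm n 2 f ^ r

theorem sobolevBound_two : SobolevBound n 2 :=
  ⟨1, one_ne_top, fun f => by simpa using lintegral_enorm_sq_le_sobNorm_sq (n := n) f⟩

theorem SobolevBound.mono {r p : ℝ} (h : SobolevBound n r) (hp : 2 ≤ p) (hpr : p ≤ r) :
    SobolevBound n p := by
  rcases hpr.eq_or_lt with rfl | hpr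
  · exact h
  obtain ⟨c, hc, hcr⟩ := h
  set θ := (r - p) / (r - 2)
  have hθ₀ : 0 ≤ θ := div_nonneg (by linarith) (by linarith)
  have hθ₁ : θ ≤ 1 := (div_le_one (by linarith)).2 (by linarith)
  have hpθ : θ * 2 + (1 - θ) * r = p := by
    have : θ * (r - 2) = r - p := div_mul_cancel₀ _ (by linarith)
    linear_combination -this
  refine ⟨c ^ (1 - θ), ENNReal.rpow_ne_top_of_nonneg (by linarith) hc, fun f => ?_⟩
  calc ∫⁻ z, ‖f z‖ₑ ^ p = ∫⁻ z, ‖f z‖ₑ ^ (θ * 2 + (1 - θ) * r) := by rw [hpθ]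
    _ ≤ (∫⁻ z, ‖f z‖ₑ ^ (2 : ℝ)) ^ θ * (∫⁻ z, ‖f z‖ₑ ^ r) ^ (1 - θ) :=
        lintegral_rpow_convex_combination_le f.continuous.enorm.measurable.aemeasurable
          zero_le_two (by linarith) hθ₀ hθ₁
    _ ≤ (sobNorm n 2 f ^ (2 : ℝ)) ^ θ * (c * sobNorm n 2 f ^ r) ^ (1 - θ) := by
        gcongr
        exacts [lintegral_enorm_sq_le_sobNorm_sq f, hcr f]
    _ = c ^ (1 - θ) * sobNorm n 2 f ^ p := by
        rw [ENNReal.mul_rpow_of_nonneg _ _ (by linarith), ← ENNReal.rpow_mul, ← ENNReal.rpow_mul,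
          ← hpθ, ENNReal.rpow_add_of_nonneg _ _ (by positivity) (by nlinarith), mul_comm 2 θ,
          mul_comm r]
        ring

theorem SobolevBound.step {s d : ℝ} (h : SobolevBound n (2 * (s - 1))) (hs : 2 ≤ s)
    (hd : (2 * n : ℝ).HolderConjugate d) : SobolevBound n (s * d) := by
  have hd' : (finrank ℝ (Fin n → ℂ) : ℝ).HolderConjugate d := by
    rwa [show (finrank ℝ (Fin n → ℂ) : ℝ) = 2 * n by
      rw [Module.finrank_pi_fintype]; simp [mul_comm]]
  obtain ⟨c, hc, hcr⟩ := h
  obtain ⟨cₛ, hcₛ, hcₛs⟩ := SobolevBound.mono ⟨c, hc, hcr⟩ (by linarith : 2 ≤ s) (by linarith)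
  obtain ⟨M, hM⟩ := exists_lintegral_rpow_le_lintegral_fderiv_add (F := ℝ) volume hd'
  set K := (lintegralPowLePowLIntegralFDerivConst (volume : Measure (Fin n → ℂ)) d : ℝ≥0∞)
  set B := ENNReal.ofReal s * (2 * n) * c ^ (1 / 2 : ℝ) + M * cₛ
  have hB : B ≠ ∞ := ENNReal.add_ne_top.2 ⟨ENNReal.mul_ne_top (by finiteness)
    (ENNReal.rpow_ne_top_of_nonneg (by norm_num) hc), ENNReal.mul_ne_top ENNReal.coe_ne_top hcₛ⟩
  refine ⟨K * B ^ d, ENNReal.mul_ne_top ENNReal.coe_ne_top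
    (ENNReal.rpow_ne_top_of_nonneg hd.symm.nonneg hB), fun f => ?_⟩
  set N := sobNorm n 2 f
  have hnorm : ∀ z, ‖‖f z‖ ^ s‖ₑ = ‖f z‖ₑ ^ s := fun z => by
    rw [← ofReal_norm, Real.norm_of_nonneg (by positivity),
      ← ENNReal.ofReal_rpow_of_nonneg (norm_nonneg _) (by linarith), ofReal_norm]
  have hderiv : ∫⁻ z, ‖fderiv ℝ (fun x => ‖f x‖ ^ s) z‖ₑ ≤
      ENNReal.ofReal s * (2 * n) * c ^ (1 / 2 : ℝ) * N ^ s := by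
    refine (lintegral_enorm_fderiv_norm_rpow_le (f.smooth 1) (by linarith)).trans ?_
    calc ENNReal.ofReal s * (2 * n) * (∫⁻ z, ‖f z‖ₑ ^ (2 * (s - 1))) ^ (1 / 2 : ℝ) * N
        ≤ ENNReal.ofReal s * (2 * n) * (c * N ^ (2 * (s - 1))) ^ (1 / 2 : ℝ) * N := by
          gcongr; exact hcr f
      _ = ENNReal.ofReal s * (2 * n) * c ^ (1 / 2 : ℝ) * N ^ s := by
          have hNs : N ^ s = N ^ (s - 1) * N := by
            nth_rw 3 [← ENNReal.rpow_one N]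
            rw [← ENNReal.rpow_add_of_nonneg _ _ (by linarith) zero_le_one, sub_add_cancel]
          rw [ENNReal.mul_rpow_of_nonneg _ _ (by norm_num), ← ENNReal.rpow_mul,
            show 2 * (s - 1) * (1 / 2) = s - 1 by ring, hNs]
          ring
  have hsum : ENNReal.ofReal s * (2 * n) * c ^ (1 / 2 : ℝ) * N ^ s + M * (cₛ * N ^ s) =
      B * N ^ s := by
    simp only [B]; ring
  calc ∫⁻ z, ‖f z‖ₑ ^ (s * d) = ∫⁻ z, ‖‖f z‖ ^ s‖ₑ ^ d := by
        simp only [hnorm, ← ENNReal.rpow_mul]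
    _ ≤ K * ((∫⁻ z, ‖fderiv ℝ (fun x => ‖f x‖ ^ s) z‖ₑ) + M * ∫⁻ z, ‖‖f z‖ ^ s‖ₑ) ^ d :=
        hM _ ((f.smooth 1).norm_rpow (by linarith))
    _ ≤ K * (ENNReal.ofReal s * (2 * n) * c ^ (1 / 2 : ℝ) * N ^ s + M * (cₛ * N ^ s)) ^ d := by
        simp only [hnorm]
        exact mul_le_mul_right (ENNReal.rpow_le_rpow
          (add_le_add hderiv (mul_le_mul_right (hcₛs f) _)) hd.symm.nonneg) _
    _ = K * B ^ d * N ^ (s * d) := by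
        rw [hsum, ENNReal.mul_rpow_of_nonneg _ _ hd.symm.nonneg, ENNReal.rpow_mul, mul_assoc]

theorem sobolevBound_of_mul_lt (hn : 1 ≤ n) {p : ℝ} (hp : 2 ≤ p) (hpn : (n - 1) * p < 2 * n) :
    SobolevBound n p := by
  have hn' : (1 : ℝ) ≤ n := by exact_mod_cast hn
  have hd : (2 * n : ℝ).HolderConjugate (2 * n : ℝ).conjExponent :=
    Real.HolderConjugate.conjExponent (by linarith)
  set δ := (2 * n - (n - 1) * p) / (2 * n - 1)
  have hδ : 0 < δ := div_pos (by linarith) (by linarith)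
  have hgain : ∀ r ≤ p, r + δ ≤ (r / 2 + 1) * (2 * n : ℝ).conjExponent := fun r hr => by
    have hgap : (r / 2 + 1) * (2 * n : ℝ).conjExponent - (r + δ) =
        (n - 1) * (p - r) / (2 * n - 1) := by
      have h2n : (2 * n : ℝ) - 1 ≠ 0 := by linarith
      simp only [δ, Real.conjExponent]
      field_simp
      ring
    have : 0 ≤ (n - 1) * (p - r) / (2 * n - 1) :=
      div_nonneg (mul_nonneg (by linarith) (by linarith)) (by linarith)
    linarith
  have hk : ∀ k : ℕ, SobolevBound n (min p (2 + k * δ)) := by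
    intro k
    induction k with
    | zero => simpa [min_eq_right hp] using sobolevBound_two
    | succ k ih =>
      set r := min p (2 + k * δ)
      have hr : 2 ≤ r := le_min hp (by nlinarith [k.cast_nonneg (α := ℝ)])
      have hstep : SobolevBound n ((r / 2 + 1) * (2 * n : ℝ).conjExponent) :=
        SobolevBound.step (by convert ih using 2; ring) (by linarith) hd
      refine hstep.mono (le_min hp (by nlinarith [k.cast_nonneg (α := ℝ)])) ?_
      refine le_trans ?_ (hgain r (min_le_left _ _))
      push_cast
      rcases min_cases p (2 + k * δ) with ⟨hmin, -⟩ | ⟨hmin, -⟩ <;>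
        simp only [r, hmin] <;> linarith [min_le_left p (2 + (k + 1) * δ),
          min_le_right p (2 + (k + 1) * δ)]
  obtain ⟨k, hk'⟩ := exists_nat_ge ((p - 2) / δ)
  have hmin : min p (2 + k * δ) = p :=
    min_eq_left (by linarith [(div_le_iff₀ hδ).1 hk'])
  simpa [hmin] using hk k

theorem exists_eLpNorm_le_mul_sobNorm (hn : 1 ≤ n) {p : ℝ} (hp : 2 ≤ p)
    (hpn : (n - 1) * p < 2 * n) :
    ∃ K : ℝ≥0∞, K ≠ ∞ ∧ ∀ f : SchwartzMap (Fin n → ℂ) ℂ,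
      eLpNorm f (ENNReal.ofReal p) volume ≤ K * sobNorm n 2 f := by
  obtain ⟨c, hc, hcp⟩ := sobolevBound_of_mul_lt hn hp hpn
  have hp₀ : 0 < p := by linarith
  refine ⟨c ^ (1 / p), ENNReal.rpow_ne_top_of_nonneg (by positivity) hc, fun f => ?_⟩
  rw [← lintegral_enorm_rpow_one_div_eq_eLpNorm hp₀]
  calc (∫⁻ z, ‖f z‖ₑ ^ p) ^ (1 / p) ≤ (c * sobNorm n 2 f ^ p) ^ (1 / p) := by
        gcongr; exact hcp f
    _ = c ^ (1 / p) * sobNorm n 2 f := by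
        rw [ENNReal.mul_rpow_of_nonneg _ _ (by positivity), ← ENNReal.rpow_mul,
          mul_one_div_cancel hp₀.ne', ENNReal.rpow_one]

end Iteration

theorem ofReal_two_mul_rpow_mul_le {C₀ α e T : ℝ} (hC₀ : 0 ≤ C₀) (hα : 0 ≤ α) (he : 0 ≤ e)
    {K : ℝ≥0∞} (hK : K ≠ ∞) (S : ℝ≥0∞) :
    ENNReal.ofReal (2 * T) ^ e * (ENNReal.ofReal C₀ * (K * S) ^ α) ≤
      ENNReal.ofReal (|C₀| * K.toReal ^ α * 2 ^ e + 1) * ENNReal.ofReal T ^ e * S ^ α := by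
  have hconst : ENNReal.ofReal C₀ * K ^ α * ENNReal.ofReal 2 ^ e ≤
      ENNReal.ofReal (|C₀| * K.toReal ^ α * 2 ^ e + 1) := by
    rw [← ENNReal.ofReal_toReal hK, ENNReal.ofReal_rpow_of_nonneg ENNReal.toReal_nonneg hα,
      ENNReal.ofReal_rpow_of_nonneg zero_le_two he, ← ENNReal.ofReal_mul hC₀,
      ← ENNReal.ofReal_mul (by positivity), abs_of_nonneg hC₀,
      ENNReal.toReal_ofReal ENNReal.toReal_nonneg]
    exact ENNReal.ofReal_le_ofReal (by linarith)
  calc ENNReal.ofReal (2 * T) ^ e * (ENNReal.ofReal C₀ * (K * S) ^ α)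
      = ENNReal.ofReal C₀ * K ^ α * ENNReal.ofReal 2 ^ e * (ENNReal.ofReal T ^ e * S ^ α) := by
        rw [ENNReal.ofReal_mul zero_le_two, ENNReal.mul_rpow_of_nonneg _ _ he,
          ENNReal.mul_rpow_of_nonneg _ _ hα]
        ring
    _ ≤ _ := by
        rw [← mul_assoc]
        gcongr

theorem sub_one_mul_add_two_lt {n : ℕ} (hn : 1 ≤ n) {α : ℝ}
    (hα : 1 < n → α < 2 / ((n : ℝ) - 1)) : ((n : ℝ) - 1) * (α + 2) < 2 * n := by
  rcases hn.eq_or_lt with rfl | hn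
  · norm_num
  have hn' : (0 : ℝ) < n - 1 := by
    have : (1 : ℝ) < n := by exact_mod_cast hn
    linarith
  have := (lt_div_iff₀' hn').1 (hα hn)
  linarith

/-- Space-time nonlinearity estimate: with `|ψ(x,y,t,r)| ≤ C₀ r^α`, `p = α+2`, `(q,p)`
admissible, `G(z,t,w) = ψ(x,y,t,|w|)w`, one has
`‖G(·,·,u)‖_{L^{q'}([−T,T];L^{p'})} ≤ C T^{(q−q')/(qq')} (ess sup_t ‖u(t)‖_{W̃^{1,2}})^α
‖u‖_{L^q([−T,T];L^p)}`, with `C` depending only on `n`, `α`, `q`, `C₀`. -/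
theorem stmt12 (n : ℕ) (hn : 1 ≤ n) (α : ℝ) (hα0 : 0 ≤ α)
    (hα : 1 < n → α < 2 / ((n : ℝ) - 1)) (q : ℝ) (hadm : Admissible n q (α + 2))
    (C₀ : ℝ) :
    ∃ C : ℝ, 0 < C ∧
      ∀ ψ : (Fin n → ℝ) → (Fin n → ℝ) → ℝ → ℝ → ℂ,
        (∀ x y t r, 0 ≤ r → ‖ψ x y t r‖ ≤ C₀ * r ^ α) →
        ∀ T : ℝ, 0 < T → ∀ u : ℝ → SchwartzMap (Fin n → ℂ) ℂ,
          Measurable (fun zt : (Fin n → ℂ) × ℝ => u zt.2 zt.1) →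
          (∫⁻ t in Set.Icc (-T) T,
              (eLpNorm (fun z : Fin n → ℂ =>
                  ψ (fun j => (z j).re) (fun j => (z j).im) t ‖u t z‖ * u t z)
                (ENNReal.ofReal ((α + 2) / (α + 1))) volume) ^ (q / (q - 1)))
              ^ ((q - 1) / q) ≤
            ENNReal.ofReal C *
              ENNReal.ofReal T ^ ((q - q / (q - 1)) / (q * (q / (q - 1)))) *
              (essSup (fun t => sobNorm n 2 (⇑(u t)))
                  (volume.restrict (Set.Icc (-T) T))) ^ α *
              (∫⁻ t in Set.Icc (-T) T,
                  (eLpNorm (⇑(u t)) (ENNReal.ofReal (α + 2)) volume) ^ q) ^ (1 / q) := by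
  obtain ⟨hq, -, -⟩ := hadm
  obtain ⟨K, hK, hsob⟩ :=
    exists_eLpNorm_le_mul_sobNorm hn (by linarith) (sub_one_mul_add_two_lt hn hα)
  set q' := q / (q - 1)
  set e := (q - q') / (q * q')
  have hq' : 0 < q' := div_pos (by linarith) (by linarith)
  have hq'q : q' ≤ q := div_le_self (by linarith) (by linarith)
  have he : 1 / q' - 1 / q = e := by rw [div_sub_div _ _ hq'.ne' (by linarith)]; ring
  refine ⟨|C₀| * K.toReal ^ α * 2 ^ e + 1, by positivity, fun ψ hψ T hT u hu => ?_⟩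
  have hC₀ : 0 ≤ C₀ := (norm_nonneg _).trans (by simpa using hψ 0 0 0 1 zero_le_one)
  set S := essSup (fun t => sobNorm n 2 (u t)) (volume.restrict (Set.Icc (-T) T))
  set h := fun t => eLpNorm (u t) (ENNReal.ofReal (α + 2)) volume
  have hF : ∀ᵐ t ∂volume.restrict (Set.Icc (-T) T),
      eLpNorm (fun z : Fin n → ℂ => ψ (fun j => (z j).re) (fun j => (z j).im) t ‖u t z‖ * u t z)
        (ENNReal.ofReal ((α + 2) / (α + 1))) volume ≤ ENNReal.ofReal C₀ * (K * S) ^ α * h t := by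
    filter_upwards [ae_le_essSup fun t => sobNorm n 2 (u t)] with t ht
    refine (eLpNorm_le_of_norm_le_mul_rpow_mul (f := u t) hC₀ hα0 fun z => ?_).trans ?_
    · rw [norm_mul]
      gcongr
      exact hψ _ _ _ _ (norm_nonneg _)
    · gcongr
      exact (hsob (u t)).trans (mul_le_mul_right ht K)
  have hmain := lintegral_Icc_rpow_one_div_le hF
    (measurable_eLpNorm_of_measurable_uncurry hu (by linarith)) hq' hq'q
  rw [he] at hmain
  rw [show (q - 1) / q = 1 / q' from (one_div_div _ _).symm]
  have he₀ : 0 ≤ e := he ▸ sub_nonneg.2 (one_div_le_one_div_of_le hq' hq'q)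
  exact hmain.trans (mul_le_mul_left (ofReal_two_mul_rpow_mul_le hC₀ hα0 he₀ hK S) _)
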